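/- arXiv:2507.14835 — 6 statements merged into one kernel-verified Lean document; each statement's English description precedes it below -/
import Mathlib

section
/- Let V be a finite vertex set and let w : unordered pairs of V → ℝ≥0 be an edge-weight vector. Define the triangle adjacency matrix A_△ by (A_△)_{i,j} = w_{{i,j}} · Σ_{s ∈ V, s ∉ {i,j}} w_{{i,s}} w_{{j,s}} for i ≠ j and (A_△)_{i,i} = 0. For every subset S ⊆ V, the triangle-motif size of the cut (S, V∖S), defined as the sum over 3-element subsets {i,j,k} of V with {i,j,k} ∩ S ≠ ∅ and {i,j,k} ∩ (V∖S) ≠ ∅ of w_{{i,j}} w_{{j,k}} w_{{k,i}}, equals (1/2) · Σ_{i ∈ S} Σ_{j ∈ V∖S} (A_△)_{i,j}. -/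
open Finset

variable {V : Type*} [Fintype V] [DecidableEq V]

/-- The triangle adjacency matrix of an edge-weight vector `w`:
`(A_△)_{i,j} = w_{{i,j}} · Σ_{s ∉ {i,j}} w_{{i,s}} w_{{j,s}}` for `i ≠ j`, zero diagonal. -/
noncomputable def triAdj (w : Sym2 V → ℝ) (i j : V) : ℝ :=
  if i = j then 0
  else w s(i, j) * ∑ s ∈ ({i, j} : Finset V)ᶜ, w s(i, s) * w s(j, s)

/-- The weight of a 3-element vertex subset: the product of its edge weights. -/
noncomputable def triWeight (w : Sym2 V → ℝ) (t : Finset V) : ℝ :=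
  ∏ e ∈ t.sym2.filter fun e => ¬ e.IsDiag, w e

private lemma wswap (w : Sym2 V → ℝ) (x y : V) : w s(x, y) = w s(y, x) := by
  rw [Sym2.eq_swap]

private lemma triWeight_explicit (w : Sym2 V → ℝ) {a b c : V}
    (hab : a ≠ b) (hac : a ≠ c) (hbc : b ≠ c) :
    triWeight w {a,b,c} = w s(a,b) * (w s(a,c) * w s(b,c)) := by
  have hset : (({a,b,c} : Finset V).sym2.filter fun e => ¬ e.IsDiag)
      = {s(a,b), s(a,c), s(b,c)} := by
    ext e
    induction e using Sym2.ind with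
    | _ x y =>
      simp only [Finset.mem_filter, Finset.mem_sym2_iff, Sym2.mem_iff, Sym2.isDiag_iff_proj_eq,
        Finset.mem_insert, Finset.mem_singleton, Sym2.eq_iff, forall_eq_or_imp, forall_eq]
      constructor
      · rintro ⟨⟨hx, hy⟩, hxy⟩
        rcases hx with rfl|rfl|rfl <;> rcases hy with rfl|rfl|rfl <;> tauto
      · rintro ((⟨rfl,rfl⟩|⟨rfl,rfl⟩)|(⟨rfl,rfl⟩|⟨rfl,rfl⟩)|(⟨rfl,rfl⟩|⟨rfl,rfl⟩)) <;> tauto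
  have h1 : s(a,b) ∉ ({s(a,c), s(b,c)} : Finset (Sym2 V)) := by
    simp [Sym2.eq_iff]; tauto
  have h2 : s(a,c) ∉ ({s(b,c)} : Finset (Sym2 V)) := by
    simp [Sym2.eq_iff]; tauto
  rw [triWeight, hset, Finset.prod_insert h1, Finset.prod_insert h2, Finset.prod_singleton]

private lemma fiber_one (S : Finset V) {a b c : V} (hab : a ≠ b) (hac : a ≠ c) (hbc : b ≠ c)
    (ha : a ∈ S) (hb : b ∉ S) (hc : c ∉ S) :
    ((S ×ˢ Sᶜ ×ˢ univ).filter (fun p : V × V × V => p.2.2 ≠ p.1 ∧ p.2.2 ≠ p.2.1)).filter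
      (fun p => ({p.1, p.2.1, p.2.2} : Finset V) = {a,b,c}) = {(a,b,c),(a,c,b)} := by
  ext ⟨i,j,s⟩
  simp only [Finset.mem_filter, Finset.mem_product, Finset.mem_compl, Finset.mem_univ,
    Finset.mem_insert, Finset.mem_singleton, Prod.mk.injEq, and_true, true_and]
  constructor
  · rintro ⟨⟨⟨hiS, hjS⟩, hsi, hsj⟩, heq⟩
    have hi : i ∈ ({a,b,c} : Finset V) := heq ▸ (by simp)
    have hj : j ∈ ({a,b,c} : Finset V) := heq ▸ (by simp)
    have hs : s ∈ ({a,b,c} : Finset V) := heq ▸ (by simp)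
    simp only [Finset.mem_insert, Finset.mem_singleton] at hi hj hs
    rcases hi with rfl|rfl|rfl
    · rcases hj with rfl|rfl|rfl
      · exact absurd hiS hjS
      · rcases hs with rfl|rfl|rfl
        · exact absurd rfl hsi
        · exact absurd rfl hsj
        · tauto
      · rcases hs with rfl|rfl|rfl
        · exact absurd rfl hsi
        · tauto
        · exact absurd rfl hsj
    · exact absurd hiS hb
    · exact absurd hiS hc
  · rintro (⟨rfl,rfl,rfl⟩|⟨rfl,rfl,rfl⟩)
    · exact ⟨⟨⟨ha, hb⟩, fun h => hac h.symm, fun h => hbc h.symm⟩, rfl⟩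
    · refine ⟨⟨⟨ha, hc⟩, fun h => hab h.symm, hbc⟩, ?_⟩
      rw [Finset.pair_comm]

private lemma fiber_two (S : Finset V) {a b c : V} (hab : a ≠ b) (hac : a ≠ c) (hbc : b ≠ c)
    (ha : a ∈ S) (hb : b ∈ S) (hc : c ∉ S) :
    ((S ×ˢ Sᶜ ×ˢ univ).filter (fun p : V × V × V => p.2.2 ≠ p.1 ∧ p.2.2 ≠ p.2.1)).filter
      (fun p => ({p.1, p.2.1, p.2.2} : Finset V) = {a,b,c}) = {(a,c,b),(b,c,a)} := by
  ext ⟨i,j,s⟩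
  simp only [Finset.mem_filter, Finset.mem_product, Finset.mem_compl, Finset.mem_univ,
    Finset.mem_insert, Finset.mem_singleton, Prod.mk.injEq, and_true, true_and]
  constructor
  · rintro ⟨⟨⟨hiS, hjS⟩, hsi, hsj⟩, heq⟩
    have hi : i ∈ ({a,b,c} : Finset V) := heq ▸ (by simp)
    have hj : j ∈ ({a,b,c} : Finset V) := heq ▸ (by simp)
    have hs : s ∈ ({a,b,c} : Finset V) := heq ▸ (by simp)
    simp only [Finset.mem_insert, Finset.mem_singleton] at hi hj hs
    rcases hj with rfl|rfl|rfl
    · exact absurd ha hjS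
    · exact absurd hb hjS
    · rcases hi with rfl|rfl|rfl
      · rcases hs with rfl|rfl|rfl
        · exact absurd rfl hsi
        · tauto
        · exact absurd rfl hsj
      · rcases hs with rfl|rfl|rfl
        · tauto
        · exact absurd rfl hsi
        · exact absurd rfl hsj
      · exact absurd hiS hc
  · rintro (⟨rfl,rfl,rfl⟩|⟨rfl,rfl,rfl⟩)
    · refine ⟨⟨⟨ha, hc⟩, fun h => hab h.symm, hbc⟩, ?_⟩
      rw [Finset.pair_comm]
    · refine ⟨⟨⟨hb, hc⟩, hab, hac⟩, ?_⟩
      ext x; simp; tauto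

private lemma fiber_sum_one (w : Sym2 V → ℝ) (S : Finset V) {a b c : V}
    (hab : a ≠ b) (hac : a ≠ c) (hbc : b ≠ c) (ha : a ∈ S) (hb : b ∉ S) (hc : c ∉ S) :
    ∑ p ∈ ((S ×ˢ Sᶜ ×ˢ univ).filter
        (fun p : V × V × V => p.2.2 ≠ p.1 ∧ p.2.2 ≠ p.2.1)).filter
        (fun p => ({p.1, p.2.1, p.2.2} : Finset V) = {a,b,c}),
      w s(p.1, p.2.1) * (w s(p.1, p.2.2) * w s(p.2.1, p.2.2))
      = 2 * triWeight w {a,b,c} := by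
  rw [fiber_one S hab hac hbc ha hb hc, Finset.sum_pair (by simp [hbc]),
    triWeight_explicit w hab hac hbc]
  simp only []
  rw [wswap w c b]
  ring

private lemma fiber_sum_two (w : Sym2 V → ℝ) (S : Finset V) {a b c : V}
    (hab : a ≠ b) (hac : a ≠ c) (hbc : b ≠ c) (ha : a ∈ S) (hb : b ∈ S) (hc : c ∉ S) :
    ∑ p ∈ ((S ×ˢ Sᶜ ×ˢ univ).filter
        (fun p : V × V × V => p.2.2 ≠ p.1 ∧ p.2.2 ≠ p.2.1)).filter
        (fun p => ({p.1, p.2.1, p.2.2} : Finset V) = {a,b,c}),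
      w s(p.1, p.2.1) * (w s(p.1, p.2.2) * w s(p.2.1, p.2.2))
      = 2 * triWeight w {a,b,c} := by
  rw [fiber_two S hab hac hbc ha hb hc, Finset.sum_pair (by simp [hab]),
    triWeight_explicit w hab hac hbc]
  simp only []
  rw [wswap w c b, wswap w b a, wswap w c a]
  ring

theorem triangle_cut_eq_half_adj_sum (w : Sym2 V → ℝ) (hw : ∀ e, 0 ≤ w e) (S : Finset V) :
    ∑ t ∈ (Finset.univ.powersetCard 3).filter
        (fun t => (t ∩ S).Nonempty ∧ (t ∩ Sᶜ).Nonempty),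
      triWeight w t
      = (1 / 2) * ∑ i ∈ S, ∑ j ∈ Sᶜ, triAdj w i j := by
  classical
  set T : Finset (Finset V) := (Finset.univ.powersetCard 3).filter
      (fun t => (t ∩ S).Nonempty ∧ (t ∩ Sᶜ).Nonempty) with hT
  set X : Finset (V × V × V) :=
      (S ×ˢ Sᶜ ×ˢ univ).filter (fun p => p.2.2 ≠ p.1 ∧ p.2.2 ≠ p.2.1) with hX
  set g : V × V × V → ℝ :=
      fun p => w s(p.1, p.2.1) * (w s(p.1, p.2.2) * w s(p.2.1, p.2.2)) with hg
  have h1 : ∑ i ∈ S, ∑ j ∈ Sᶜ, triAdj w i j = ∑ p ∈ X, g p := by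
    rw [hX, Finset.sum_filter, Finset.sum_product]
    refine Finset.sum_congr rfl fun i hi => ?_
    rw [Finset.sum_product]
    refine Finset.sum_congr rfl fun j hj => ?_
    have hij : i ≠ j := fun h => (Finset.mem_compl.mp hj) (h ▸ hi)
    rw [triAdj, if_neg hij, Finset.mul_sum]
    have hcompl : (({i, j} : Finset V))ᶜ = univ.filter (fun s => s ≠ i ∧ s ≠ j) := by
      ext x; simp [not_or]
    rw [hcompl, Finset.sum_filter]
  have hmaps : ∀ p ∈ X, ({p.1, p.2.1, p.2.2} : Finset V) ∈ T := by
    rintro ⟨i, j, s⟩ hp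
    simp only [hX, Finset.mem_filter, Finset.mem_product, Finset.mem_compl,
      Finset.mem_univ, and_true, true_and] at hp
    obtain ⟨⟨hiS, hjS⟩, hsi, hsj⟩ := hp
    have hij : i ≠ j := fun h => hjS (h ▸ hiS)
    rw [hT, Finset.mem_filter, Finset.mem_powersetCard_univ]
    refine ⟨?_, ⟨i, ?_⟩, ⟨j, ?_⟩⟩
    · rw [Finset.card_insert_of_notMem (by simp [hij, Ne.symm hsi]),
        Finset.card_insert_of_notMem (by simp [Ne.symm hsj]),
        Finset.card_singleton]
    · simp [hiS]
    · simp [hjS]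
  have h2 : ∑ p ∈ X, g p
      = ∑ t ∈ T, ∑ p ∈ X.filter (fun p => ({p.1, p.2.1, p.2.2} : Finset V) = t), g p :=
    (Finset.sum_fiberwise_of_maps_to hmaps g).symm
  have h3 : ∀ t ∈ T, ∑ p ∈ X.filter (fun p => ({p.1, p.2.1, p.2.2} : Finset V) = t), g p
      = 2 * triWeight w t := by
    intro t ht
    rw [hT, Finset.mem_filter, Finset.mem_powersetCard_univ] at ht
    obtain ⟨hcard, hS, hSc⟩ := ht
    obtain ⟨a, b, c, hab, hac, hbc, rfl⟩ := Finset.card_eq_three.mp hcard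
    by_cases ha : a ∈ S <;> by_cases hb : b ∈ S <;> by_cases hc : c ∈ S
    · exfalso
      obtain ⟨x, hx⟩ := hSc
      rw [Finset.mem_inter, Finset.mem_compl] at hx
      rcases Finset.mem_insert.mp hx.1 with rfl | hx'
      · exact hx.2 ha
      rcases Finset.mem_insert.mp hx' with rfl | hx''
      · exact hx.2 hb
      · exact hx.2 (Finset.mem_singleton.mp hx'' ▸ hc)
    · exact fiber_sum_two w S hab hac hbc ha hb hc
    · rw [show ({a,b,c} : Finset V) = {a,c,b} by rw [Finset.pair_comm]]
      exact fiber_sum_two w S hac hab (fun h => hbc h.symm) ha hc hb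
    · exact fiber_sum_one w S hab hac hbc ha hb hc
    · rw [show ({a,b,c} : Finset V) = {b,c,a} by ext x; simp; tauto]
      exact fiber_sum_two w S hbc (fun h => hab h.symm) (fun h => hac h.symm) hb hc ha
    · rw [show ({a,b,c} : Finset V) = {b,a,c} by rw [Finset.insert_comm]]
      exact fiber_sum_one w S (fun h => hab h.symm) hbc hac hb ha hc
    · rw [show ({a,b,c} : Finset V) = {c,a,b} by ext x; simp; tauto]
      exact fiber_sum_one w S (fun h => hac h.symm) (fun h => hbc h.symm) hab hc ha hb
    · exfalso
      obtain ⟨x, hx⟩ := hS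
      rw [Finset.mem_inter] at hx
      rcases Finset.mem_insert.mp hx.1 with rfl | hx'
      · exact ha hx.2
      rcases Finset.mem_insert.mp hx' with rfl | hx''
      · exact hb hx.2
      · exact hc (Finset.mem_singleton.mp hx'' ▸ hx.2)
  rw [h1, h2, Finset.sum_congr rfl h3, Finset.mul_sum]
  exact Finset.sum_congr rfl fun t _ => by ring
end

section
/- Let G = (V, w) be a weighted graph, let W = Σ_e w_e be the total edge weight, and let ℓ₃(G) = max over unordered pairs {i,j} of Σ_{s ∉ {i,j}} w_{{i,s}} w_{{j,s}}. Then for all disjoint subsets S, T ⊆ V, the triangle-motif size of the cut satisfies Cut_△(S,T) ≤ W · ℓ₃(G). -/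
open Finset

variable {V : Type*} [Fintype V] [DecidableEq V]

/-- Triangle-motif size of the cut `(S, T)`: the total weight of the 3-element subsets
meeting both `S` and `T`. -/
noncomputable def cutTri (w : Sym2 V → ℝ) (S T : Finset V) : ℝ :=
  ∑ t ∈ (Finset.univ.powersetCard 3).filter
      (fun t => (t ∩ S).Nonempty ∧ (t ∩ T).Nonempty),
    triWeight w t

/-- Total edge weight: the sum of `w` over unordered pairs of distinct vertices. -/
noncomputable def totalWeight (w : Sym2 V → ℝ) : ℝ :=
  ∑ e ∈ Finset.univ.filter fun e : Sym2 V => ¬ e.IsDiag, w e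

/-- Local sensitivity of triangle-motif cuts:
the maximum over unordered pairs `{i,j}` of `Σ_{s ∉ {i,j}} w_{{i,s}} w_{{j,s}}`. -/
noncomputable def ell3 (w : Sym2 V → ℝ) : ℝ :=
  ⨆ p : V × V,
    if p.1 ≠ p.2 then ∑ s ∈ ({p.1, p.2} : Finset V)ᶜ, w s(p.1, s) * w s(p.2, s) else 0

/-! Every triangle `{a, b, c}` is obtained by adding the vertex `a` to the edge `s(b, c)`, so the
total triangle weight, and a fortiori the weight of the triangles cut by `(S, T)`, is at most
`∑_e ∑_{s ∉ e} w_e w_{is} w_{js}` with `e = s(i, j)`. For each edge the inner sum is one of the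
quantities whose maximum is `ℓ₃`, so the double sum is at most `∑_e w_e ℓ₃ = W ℓ₃`. -/

section Triangles

variable {α : Type*} [DecidableEq α]

lemma triWeight_triple (w : Sym2 α → ℝ) {a b c : α} (hab : a ≠ b) (hac : a ≠ c) (hbc : b ≠ c) :
    triWeight w {a, b, c} = w s(a, b) * w s(a, c) * w s(b, c) := by
  have hedges : ({a, b, c} : Finset α).sym2.filter (fun e => ¬ e.IsDiag)
      = {s(a, b), s(a, c), s(b, c)} := by
    ext e
    induction e
    simp only [mem_filter, mk_mem_sym2_iff, Sym2.mk_isDiag_iff, mem_insert, mem_singleton,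
      Sym2.eq_iff]
    aesop
  rw [triWeight, hedges, prod_insert (by simp; tauto), prod_insert (by simp; tauto),
    prod_singleton, mul_assoc]

lemma triWeight_nonneg {w : Sym2 α → ℝ} (hw : ∀ e, 0 ≤ w e) (t : Finset α) :
    0 ≤ triWeight w t :=
  prod_nonneg fun e _ => hw e

lemma card_insert_toFinset_of_not_isDiag {e : Sym2 α} (he : ¬ e.IsDiag) {s : α} (hs : s ∉ e) :
    #(insert s e.toFinset) = 3 := by
  rw [card_insert_of_notMem (by rwa [Sym2.mem_toFinset]), Sym2.card_toFinset_of_not_isDiag e he]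

end Triangles

lemma cutTri_le_sum_triWeight {w : Sym2 V → ℝ} (hw : ∀ e, 0 ≤ w e) (S T : Finset V) :
    cutTri w S T ≤ ∑ t ∈ univ.powersetCard 3, triWeight w t :=
  sum_le_sum_of_subset_of_nonneg (filter_subset _ _) fun t _ _ => triWeight_nonneg hw t

lemma sum_mul_le_ell3 (w : Sym2 V → ℝ) {i j : V} (hij : i ≠ j) :
    ∑ s ∈ ({i, j} : Finset V)ᶜ, w s(i, s) * w s(j, s) ≤ ell3 w := by
  refine (le_of_eq ?_).trans (le_ciSup (Set.finite_range _).bddAbove (i, j))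
  simp [hij]

def edgeVertexPairs (V : Type*) [Fintype V] [DecidableEq V] : Finset (Σ _ : Sym2 V, V) :=
  (univ.filter fun e : Sym2 V => ¬ e.IsDiag).sigma fun e => e.toFinsetᶜ

lemma image_edgeVertexPairs :
    (edgeVertexPairs V).image (fun p => insert p.2 p.1.toFinset) = univ.powersetCard 3 := by
  ext t
  simp only [edgeVertexPairs, mem_image, mem_sigma, mem_filter, mem_univ, true_and, mem_compl,
    Sym2.mem_toFinset, mem_powersetCard_univ]
  constructor
  · rintro ⟨⟨e, s⟩, ⟨he, hs⟩, rfl⟩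
    exact card_insert_toFinset_of_not_isDiag he hs
  · intro ht
    obtain ⟨a, b, c, hab, hac, hbc, rfl⟩ := card_eq_three.mp ht
    exact ⟨⟨s(b, c), a⟩, ⟨by simpa using hbc, by simp [hab, hac]⟩, by simp [Sym2.toFinset_mk_eq]⟩

lemma sum_triWeight_le_sum_edgeVertexPairs {w : Sym2 V → ℝ} (hw : ∀ e, 0 ≤ w e) :
    ∑ t ∈ univ.powersetCard 3, triWeight w t ≤
      ∑ e ∈ univ.filter (fun e : Sym2 V => ¬ e.IsDiag), ∑ s ∈ e.toFinsetᶜ,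
        triWeight w (insert s e.toFinset) := by
  rw [← image_edgeVertexPairs, edgeVertexPairs, sum_sigma']
  exact sum_image_le_of_nonneg fun t _ => triWeight_nonneg hw t

lemma sum_triWeight_insert_le {w : Sym2 V → ℝ} (hw : ∀ e, 0 ≤ w e) {e : Sym2 V}
    (he : ¬ e.IsDiag) :
    ∑ s ∈ e.toFinsetᶜ, triWeight w (insert s e.toFinset) ≤ w e * ell3 w := by
  induction e with
  | _ i j =>
    have hij : i ≠ j := by simpa using he
    have hterm : ∀ s ∈ ({i, j} : Finset V)ᶜ,
        triWeight w (insert s {i, j}) = w s(i, j) * (w s(i, s) * w s(j, s)) := by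
      intro s hs
      simp only [mem_compl, mem_insert, mem_singleton, not_or] at hs
      rw [triWeight_triple w hs.1 hs.2 hij, Sym2.eq_swap (a := s), Sym2.eq_swap (a := s)]
      ring
    rw [Sym2.toFinset_mk_eq, sum_congr rfl hterm, ← mul_sum]
    exact mul_le_mul_of_nonneg_left (sum_mul_le_ell3 w hij) (hw _)

theorem cutTri_le_totalWeight_mul_ell3_general (w : Sym2 V → ℝ) (hw : ∀ e, 0 ≤ w e)
    (S T : Finset V) :
    cutTri w S T ≤ totalWeight w * ell3 w := by
  calc cutTri w S T ≤ ∑ t ∈ univ.powersetCard 3, triWeight w t := cutTri_le_sum_triWeight hw S T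
    _ ≤ ∑ e ∈ univ.filter (fun e : Sym2 V => ¬ e.IsDiag), ∑ s ∈ e.toFinsetᶜ,
          triWeight w (insert s e.toFinset) := sum_triWeight_le_sum_edgeVertexPairs hw
    _ ≤ ∑ e ∈ univ.filter (fun e : Sym2 V => ¬ e.IsDiag), w e * ell3 w :=
          sum_le_sum fun e he => sum_triWeight_insert_le hw (mem_filter.mp he).2
    _ = totalWeight w * ell3 w := by rw [totalWeight, sum_mul]

theorem cutTri_le_totalWeight_mul_ell3 (w : Sym2 V → ℝ) (hw : ∀ e, 0 ≤ w e)
    (S T : Finset V) (hST : Disjoint S T) :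
    cutTri w S T ≤ totalWeight w * ell3 w :=
  cutTri_le_totalWeight_mul_ell3_general w hw S T
end

section
/- Let M ∈ ℝ^{n×n} be a symmetric matrix and let N ∈ ℝ^{2n×2n} be the block matrix [[0, M],[M, 0]]. Then for all vectors x, y ∈ {0,1}^n there exists a symmetric positive semidefinite matrix X ∈ ℝ^{2n×2n} with X_{i,i} = 1 for all i such that |xᵀ M y| ≤ (1/2) · (N • X), where N • X = tr(Nᵀ X) = Σ_{i,j} N_{i,j} X_{i,j}. In particular, the cut norm max_{x,y ∈ {0,1}^n} |xᵀ M y| is bounded by the value of the semidefinite program max{ (1/2) N • X : X symmetric, X ⪰ 0, X_{i,i} = 1 for all i }. -/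
/-!
Let `s = ±1` be the sign of `xᵀ M y`. Sending row `i` to `s xᵢ e₀ + (1 - xᵢ) e₂` and column `j`
to `yⱼ e₀ + (1 - yⱼ) e₁` gives unit vectors in `ℝ³` (as `xᵢ, yⱼ ∈ {0, 1}`) whose row–column
inner products are `s xᵢ yⱼ`. Their Gram matrix is therefore feasible, and since `M` is symmetric
both off-diagonal blocks of `N` contribute `s xᵀ M y = |xᵀ M y|` to `N • X`. For the suprema, the
feasible matrices have entries in `[-1, 1]` (test the form on `eᵢ ± eⱼ`), so the SDP values are
bounded above.
-/

open Matrix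

namespace Matrix

variable {ι R : Type*} [Fintype ι]

theorem PosSemidef.two_mul_abs_apply_le [CommRing R] [LinearOrder R] [IsStrictOrderedRing R]
    [StarRing R] [TrivialStar R] {A : Matrix ι ι R} (hA : A.PosSemidef) (i j : ι) :
    2 * |A i j| ≤ A i i + A j j := by
  classical
  have hsymm : A j i = A i j := (isHermitian_iff_isSymm.mp hA.1).apply i j
  have quad (s : R) (hs : s * s = 1) : 0 ≤ A i i + A j j + 2 * s * A i j := by
    have h := hA.dotProduct_mulVec_nonneg (Pi.single i 1 + Pi.single j s)
    simp only [star_trivial, mulVec_add, mulVec_single, dotProduct_add, add_dotProduct,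
      single_dotProduct, Pi.smul_apply, col_apply, op_smul_eq_mul] at h
    linear_combination h + A j j * hs + s * hsymm
  have hplus := quad 1 (one_mul 1)
  have hminus := quad (-1) (by ring)
  rcases abs_choice (A i j) with h | h <;> rw [h] <;> linarith

theorem PosSemidef.sum_mul_le_sum_abs [CommRing R] [LinearOrder R] [IsStrictOrderedRing R]
    [StarRing R] [TrivialStar R] {X : Matrix ι ι R} (hX : X.PosSemidef) (hX1 : ∀ i, X i i = 1)
    (N : Matrix ι ι R) : ∑ i, ∑ j, N i j * X i j ≤ ∑ i, ∑ j, |N i j| := by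
  gcongr with i _ j _
  have hXij : |X i j| ≤ 1 := by linarith [hX.two_mul_abs_apply_le i j, hX1 i, hX1 j]
  calc N i j * X i j ≤ |N i j| * |X i j| := abs_mul (N i j) (X i j) ▸ le_abs_self _
    _ ≤ |N i j| := mul_le_of_le_one_right (abs_nonneg _) hXij

theorem sum_fromBlocks_zero_mul [CommSemiring R] {M : Matrix ι ι R} (hM : M.IsSymm)
    {X : Matrix (ι ⊕ ι) (ι ⊕ ι) R} (hX : X.IsSymm) :
    ∑ a, ∑ b, fromBlocks 0 M M 0 a b * X a b = 2 * ∑ i, ∑ j, M i j * X (.inl i) (.inr j) := by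
  simp only [Fintype.sum_sum_type, fromBlocks_apply₁₁, fromBlocks_apply₁₂, fromBlocks_apply₂₁,
    fromBlocks_apply₂₂, zero_apply, zero_mul, Finset.sum_const_zero, zero_add, add_zero]
  rw [two_mul, Finset.sum_comm (f := fun i j => M i j * X (.inr i) (.inl j))]
  refine congrArg _ (Finset.sum_congr rfl fun i _ => Finset.sum_congr rfl fun j _ => ?_)
  rw [hM.apply, hX.apply]

theorem bddAbove_sdp_values (N : Matrix ι ι ℝ) :
    BddAbove {r : ℝ | ∃ X : Matrix ι ι ℝ, X.IsSymm ∧ X.PosSemidef ∧ (∀ i, X i i = 1) ∧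
      r = (1 / 2) * ∑ i, ∑ j, N i j * X i j} := by
  refine ⟨(1 / 2) * ∑ i, ∑ j, |N i j|, ?_⟩
  rintro _ ⟨X, -, hX, hX1, rfl⟩
  exact mul_le_mul_of_nonneg_left (hX.sum_mul_le_sum_abs hX1 N) one_half_pos.le

end Matrix

section CutVectors

open scoped RealInnerProductSpace

variable {ι : Type*}

theorem EuclideanSpace.inner_vecCons_three (a b c d e f : ℝ) :
    ⟪!₂[a, b, c], !₂[d, e, f]⟫ = a * d + b * e + c * f := by
  simp only [PiLp.inner_apply, RCLike.inner_apply, Real.ringHom_apply, Fin.sum_univ_three,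
    cons_val_zero, cons_val_one, cons_val]
  ring

noncomputable def cutVectors (s : ℝ) (x y : ι → ℝ) : ι ⊕ ι → EuclideanSpace ℝ (Fin 3) :=
  Sum.elim (fun i => !₂[s * x i, 0, 1 - x i]) (fun j => !₂[y j, 1 - y j, 0])

theorem inner_cutVectors_inl_inr (s : ℝ) (x y : ι → ℝ) (i j : ι) :
    ⟪cutVectors s x y (.inl i), cutVectors s x y (.inr j)⟫ = s * (x i * y j) := by
  simp only [cutVectors, Sum.elim_inl, Sum.elim_inr, EuclideanSpace.inner_vecCons_three]
  ring

theorem inner_cutVectors_self {s : ℝ} (hs : s ^ 2 = 1) {x y : ι → ℝ}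
    (hx : ∀ i, x i = 0 ∨ x i = 1) (hy : ∀ i, y i = 0 ∨ y i = 1) (a : ι ⊕ ι) :
    ⟪cutVectors s x y a, cutVectors s x y a⟫ = 1 := by
  rcases a with i | j
  · simp only [cutVectors, Sum.elim_inl, EuclideanSpace.inner_vecCons_three]
    rcases hx i with h | h <;> rw [h]
    · ring
    · linear_combination hs
  · simp only [cutVectors, Sum.elim_inr, EuclideanSpace.inner_vecCons_three]
    rcases hy j with h | h <;> rw [h] <;> norm_num

theorem exists_sdp_feasible_eq_abs_dotProduct_mulVec [Fintype ι] {M : Matrix ι ι ℝ}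
    (hM : M.IsSymm) {x y : ι → ℝ} (hx : ∀ i, x i = 0 ∨ x i = 1) (hy : ∀ i, y i = 0 ∨ y i = 1) :
    ∃ X : Matrix (ι ⊕ ι) (ι ⊕ ι) ℝ, X.IsSymm ∧ X.PosSemidef ∧ (∀ a, X a a = 1) ∧
      (1 / 2) * ∑ a, ∑ b, fromBlocks 0 M M 0 a b * X a b = |x ⬝ᵥ M *ᵥ y| := by
  obtain ⟨s, hs, habs⟩ : ∃ s : ℝ, s ^ 2 = 1 ∧ |x ⬝ᵥ M *ᵥ y| = s * (x ⬝ᵥ M *ᵥ y) := by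
    rcases abs_choice (x ⬝ᵥ M *ᵥ y) with h | h
    exacts [⟨1, one_pow 2, h.trans (one_mul _).symm⟩,
      ⟨-1, by norm_num, h.trans (neg_one_mul _).symm⟩]
  set X := gram ℝ (cutVectors s x y)
  have hXsymm : X.IsSymm := isHermitian_iff_isSymm.mp (isHermitian_gram ℝ _)
  refine ⟨X, hXsymm, posSemidef_gram ℝ _, inner_cutVectors_self hs hx hy, ?_⟩
  rw [sum_fromBlocks_zero_mul hM hXsymm, habs, one_div, inv_mul_cancel_left₀ two_ne_zero]
  simp only [X, gram_apply, inner_cutVectors_inl_inr, dotProduct, mulVec,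
    Finset.mul_sum]
  exact Finset.sum_congr rfl fun i _ => Finset.sum_congr rfl fun j _ => by ring

end CutVectors

theorem cutnorm_le_sdp (n : ℕ) (M : Matrix (Fin n) (Fin n) ℝ) (hM : M.IsSymm)
    (N : Matrix (Fin n ⊕ Fin n) (Fin n ⊕ Fin n) ℝ)
    (hN : N = Matrix.fromBlocks 0 M M 0) :
    (∀ x y : Fin n → ℝ, (∀ i, x i = 0 ∨ x i = 1) → (∀ i, y i = 0 ∨ y i = 1) →
      ∃ X : Matrix (Fin n ⊕ Fin n) (Fin n ⊕ Fin n) ℝ,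
        X.IsSymm ∧ X.PosSemidef ∧ (∀ i, X i i = 1) ∧
          |x ⬝ᵥ M.mulVec y| ≤ (1 / 2) * ∑ i, ∑ j, N i j * X i j) ∧
    sSup {v : ℝ | ∃ x y : Fin n → ℝ, (∀ i, x i = 0 ∨ x i = 1) ∧ (∀ i, y i = 0 ∨ y i = 1) ∧
        v = |x ⬝ᵥ M.mulVec y|} ≤
      sSup {r : ℝ | ∃ X : Matrix (Fin n ⊕ Fin n) (Fin n ⊕ Fin n) ℝ,
        X.IsSymm ∧ X.PosSemidef ∧ (∀ i, X i i = 1) ∧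
          r = (1 / 2) * ∑ i, ∑ j, N i j * X i j} := by
  subst hN
  have feasible (x y : Fin n → ℝ) (hx : ∀ i, x i = 0 ∨ x i = 1) (hy : ∀ i, y i = 0 ∨ y i = 1) :
      ∃ X : Matrix (Fin n ⊕ Fin n) (Fin n ⊕ Fin n) ℝ, X.IsSymm ∧ X.PosSemidef ∧ (∀ i, X i i = 1) ∧
        |x ⬝ᵥ M.mulVec y| ≤ (1 / 2) * ∑ i, ∑ j, fromBlocks 0 M M 0 i j * X i j := by
    obtain ⟨X, hXs, hX, hX1, hval⟩ := exists_sdp_feasible_eq_abs_dotProduct_mulVec hM hx hy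
    exact ⟨X, hXs, hX, hX1, hval.ge⟩
  refine ⟨feasible, csSup_le ⟨_, 0, 0, fun _ => .inl rfl, fun _ => .inl rfl, rfl⟩ ?_⟩
  rintro _ ⟨x, y, hx, hy, rfl⟩
  obtain ⟨X, hXs, hX, hX1, hval⟩ := feasible x y hx hy
  exact hval.trans (le_csSup (bddAbove_sdp_values _) ⟨X, hXs, hX, hX1, rfl⟩)
end

section
/- Let N ≥ 1 and let y, u ∈ ℝ^N have strictly positive entries, and let W be a real number with 0 < W ≤ Σ_{e=1}^N u_e. Then there exists c > 0 such that Σ_{e=1}^N min(u_e, c·y_e) = W, and the vector w* defined by w*_e = min(u_e, c·y_e) is a minimizer of the function w ↦ Σ_{e=1}^N w_e · log(w_e / y_e) (with the convention 0·log 0 = 0) over the feasible set { w ∈ ℝ^N : w_e ≥ 0 for all e, Σ_e w_e = W, and w_e ≤ u_e for all e }. -/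
private lemma md_key (a b y : ℝ) (ha : 0 < a) (hb : 0 ≤ b) (hy : 0 < y) :
    a * Real.log (a / y) + (Real.log (a / y) + 1) * (b - a) ≤ b * Real.log (b / y) := by
  rcases hb.eq_or_lt with rfl | hb
  · simp only [zero_div, Real.log_zero, zero_mul, zero_sub]
    nlinarith
  · have hla : Real.log (a / y) = Real.log a - Real.log y := Real.log_div ha.ne' hy.ne'
    have hlb : Real.log (b / y) = Real.log b - Real.log y := Real.log_div hb.ne' hy.ne'
    have h2 : Real.log (a / b) ≤ a / b - 1 := Real.log_le_sub_one_of_pos (div_pos ha hb)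
    have h3 : Real.log (a / b) = Real.log a - Real.log b := Real.log_div ha.ne' hb.ne'
    have h4 : b * (a / b) = a := mul_div_cancel₀ a hb.ne'
    nlinarith [mul_le_mul_of_nonneg_left h2 hb.le]

theorem md_update_minimizer (N : ℕ) (hN : 1 ≤ N) (y u : Fin N → ℝ)
    (hy : ∀ e, 0 < y e) (hu : ∀ e, 0 < u e)
    (W : ℝ) (hW : 0 < W) (hWu : W ≤ ∑ e, u e) :
    ∃ c : ℝ, 0 < c ∧ (∑ e, min (u e) (c * y e)) = W ∧
      ∀ w : Fin N → ℝ, (∀ e, 0 ≤ w e) → (∑ e, w e) = W → (∀ e, w e ≤ u e) →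
        (∑ e, min (u e) (c * y e) * Real.log (min (u e) (c * y e) / y e)) ≤
          ∑ e, w e * Real.log (w e / y e) := by
  have hne : Nonempty (Fin N) := Fin.pos_iff_nonempty.mp hN
  have hSy : 0 < ∑ e, y e := Finset.sum_pos (fun e _ => hy e) Finset.univ_nonempty
  set f : ℝ → ℝ := fun c => ∑ e, min (u e) (c * y e) with hf
  have hfc : Continuous f := continuous_finset_sum _ fun e _ =>
    continuous_const.min (continuous_id.mul continuous_const)
  set c0 : ℝ := W / (∑ e, y e) with hc0def
  have hc0 : 0 < c0 := div_pos hW hSy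
  have hfc0 : f c0 ≤ W := by
    calc f c0 ≤ ∑ e, c0 * y e := Finset.sum_le_sum fun e _ => min_le_right _ _
    _ = c0 * ∑ e, y e := by rw [Finset.mul_sum]
    _ = W := div_mul_cancel₀ W hSy.ne'
  set C : ℝ := ∑ e, u e / y e with hCdef
  have hCc : ∀ e, u e ≤ C * y e := by
    intro e
    have h1 : u e / y e ≤ C :=
      Finset.single_le_sum (fun i _ => div_nonneg (hu i).le (hy i).le) (Finset.mem_univ e)
    calc u e = (u e / y e) * y e := (div_mul_cancel₀ _ (hy e).ne').symm
    _ ≤ C * y e := mul_le_mul_of_nonneg_right h1 (hy e).le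
  have hmono : Monotone f := fun s t hst =>
    Finset.sum_le_sum fun e _ => min_le_min le_rfl (mul_le_mul_of_nonneg_right hst (hy e).le)
  have hfC' : W ≤ f (max c0 C) := by
    have hC : f C = ∑ e, u e := Finset.sum_congr rfl fun e _ => min_eq_left (hCc e)
    calc W ≤ ∑ e, u e := hWu
    _ = f C := hC.symm
    _ ≤ f (max c0 C) := hmono (le_max_right _ _)
  obtain ⟨c, hcmem, hcW⟩ := intermediate_value_Icc (le_max_left c0 C) hfc.continuousOn
    (⟨hfc0, hfC'⟩ : W ∈ Set.Icc (f c0) (f (max c0 C)))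
  have hc : 0 < c := lt_of_lt_of_le hc0 hcmem.1
  refine ⟨c, hc, hcW, ?_⟩
  intro w hw hwsum hwu
  have hstar : ∀ e, 0 < min (u e) (c * y e) := fun e => lt_min (hu e) (mul_pos hc (hy e))
  have hkey : ∀ e, min (u e) (c * y e) * Real.log (min (u e) (c * y e) / y e)
      + (Real.log c + 1) * (w e - min (u e) (c * y e)) ≤ w e * Real.log (w e / y e) := by
    intro e
    have h1 := md_key (min (u e) (c * y e)) (w e) (y e) (hstar e) (hw e) (hy e)
    rcases le_or_gt (u e) (c * y e) with h | h
    · have hm : min (u e) (c * y e) = u e := min_eq_left h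
      have hslope : Real.log (min (u e) (c * y e) / y e) ≤ Real.log c := by
        rw [hm]
        exact Real.log_le_log (div_pos (hu e) (hy e)) ((div_le_iff₀ (hy e)).mpr h)
      have hwle : w e - min (u e) (c * y e) ≤ 0 := by rw [hm]; linarith [hwu e]
      have := mul_le_mul_of_nonpos_right (by linarith :
        Real.log (min (u e) (c * y e) / y e) + 1 ≤ Real.log c + 1) hwle
      linarith
    · have hm : min (u e) (c * y e) = c * y e := min_eq_right h.le
      have heq : min (u e) (c * y e) / y e = c := by
        rw [hm, mul_div_assoc, div_self (hy e).ne', mul_one]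
      rw [heq] at h1 ⊢
      exact h1
  have hsum := Finset.sum_le_sum (fun e (_ : e ∈ Finset.univ) => hkey e)
  rw [Finset.sum_add_distrib] at hsum
  have hz : ∑ e, (Real.log c + 1) * (w e - min (u e) (c * y e)) = 0 := by
    have hcW' : ∑ e, min (u e) (c * y e) = W := hcW
    rw [← Finset.mul_sum, Finset.sum_sub_distrib, hwsum, hcW', sub_self, mul_zero]
  linarith
end

section
/- Let n ≥ 1 and let a₁, …, a_n be real numbers. Let ρ₁, …, ρ_n be independent random variables, each taking the value 1 with probability 1/2 and the value 0 with probability 1/2. Then E[ |Σ_{i=1}^n ρ_i a_i| ] ≥ (Σ_{i=1}^n |a_i|) / √(8n). -/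
/-!
Write `ε i = 2 ρ i - 1` for the associated signs. Then `∑ ε i a i` is the difference of the sums
of `a` over `{ρ = 1}` and over `{ρ = 0}`, which have the same distribution, so
`E |∑ ε i a i| ≤ 2 E |∑ ρ i a i|`. Flipping signs we may take `a ≥ 0`, and averaging over the
cyclic shifts of `a` replaces it by the constant vector with the same sum:
`(∑ a i) E |∑ ε i| ≤ n E |∑ ε i a i|`. Finally `E |∑ ε i| = n C(n-1, ⌊(n-1)/2⌋) / 2 ^ (n-1)`
(de Moivre), which a central binomial estimate bounds below by `√(n/2)`.
-/

open Finset

def signedSum {ι : Type*} [Fintype ι] (c : ι → ℝ) (σ : ι → Bool) : ℝ :=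
  ∑ i, (if σ i then 1 else -1) * c i

section SignedSum

variable {ι : Type*} [Fintype ι]

lemma signedSum_const (t : ℝ) (σ : ι → Bool) :
    signedSum (fun _ ↦ t) σ = t * signedSum 1 σ := by
  simp only [signedSum, mul_sum, Pi.one_apply]
  exact sum_congr rfl fun i _ ↦ by ring

lemma signedSum_comp_equiv (c : ι → ℝ) (e : ι ≃ ι) (σ : ι → Bool) :
    signedSum (c ∘ e) σ = signedSum c (σ ∘ e.symm) := by
  rw [signedSum, signedSum, ← e.sum_comp (fun i ↦ (if (σ ∘ e.symm) i then 1 else -1) * c i)]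
  simp

lemma signedSum_one (σ : ι → Bool) :
    signedSum 1 σ = 2 * #{i | σ i} - Fintype.card ι := by
  have hsign (i : ι) :
      (if σ i then 1 else -1) * (1 : ι → ℝ) i = 2 * (if σ i then 1 else 0) - 1 := by
    by_cases h : σ i <;> norm_num [h]
  rw [signedSum, sum_congr rfl fun i _ ↦ hsign i, sum_sub_distrib, ← mul_sum, sum_boole]
  simp

variable [DecidableEq ι]

lemma sum_abs_signedSum_abs (c : ι → ℝ) :
    ∑ σ : ι → Bool, |signedSum (fun i ↦ |c i|) σ| = ∑ σ : ι → Bool, |signedSum c σ| := by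
  let flip : (ι → Bool) ≃ (ι → Bool) :=
    Equiv.piCongrRight fun i ↦ if c i < 0 then Equiv.boolNot else Equiv.refl Bool
  rw [← flip.sum_comp]
  refine sum_congr rfl fun σ _ ↦ congrArg _ (sum_congr rfl fun i _ ↦ ?_)
  by_cases h : c i < 0
  · cases hσ : σ i <;> simp [flip, h, hσ, abs_of_neg]
  · cases hσ : σ i <;> simp [flip, h, hσ, abs_of_nonneg (not_lt.1 h)]

lemma sum_abs_signedSum_le_two_mul (c : ι → ℝ) :
    ∑ σ : ι → Bool, |signedSum c σ| ≤ 2 * ∑ σ : ι → Bool, |∑ i, if σ i then c i else 0| := by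
  let partSum (σ : ι → Bool) : ℝ := ∑ i, if σ i then c i else 0
  have hsplit (σ : ι → Bool) : signedSum c σ = partSum σ - partSum (fun i ↦ !σ i) := by
    simp only [signedSum, partSum, ← sum_sub_distrib]
    refine sum_congr rfl fun i _ ↦ ?_
    by_cases hσ : σ i <;> simp [hσ]
  have hnot : ∑ σ : ι → Bool, |partSum (fun i ↦ !σ i)| = ∑ σ : ι → Bool, |partSum σ| :=
    (Equiv.arrowCongr (Equiv.refl ι) Equiv.boolNot).sum_comp (fun σ ↦ |partSum σ|)
  calc ∑ σ : ι → Bool, |signedSum c σ|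
      ≤ ∑ σ : ι → Bool, (|partSum σ| + |partSum (fun i ↦ !σ i)|) :=
        sum_le_sum fun σ _ ↦ (hsplit σ).symm ▸ abs_sub _ _
    _ = 2 * ∑ σ : ι → Bool, |partSum σ| := by rw [sum_add_distrib, hnot, two_mul]

lemma sum_mul_sum_abs_signedSum_one_le [AddCommGroup ι] (c : ι → ℝ) (hc : 0 ≤ c) :
    (∑ i, c i) * ∑ σ : ι → Bool, |signedSum 1 σ| ≤
      Fintype.card ι * ∑ σ : ι → Bool, |signedSum c σ| := by
  have hshift (σ : ι → Bool) :
      (∑ i, c i) * signedSum 1 σ = ∑ k, signedSum (c ∘ Equiv.addRight k) σ := by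
    rw [← signedSum_const]
    simp only [signedSum, Function.comp_apply, Equiv.coe_addRight]
    rw [sum_comm]
    refine sum_congr rfl fun i _ ↦ ?_
    rw [← mul_sum, ← Equiv.sum_comp (Equiv.addLeft i) c]
    simp only [Equiv.coe_addLeft]
  calc (∑ i, c i) * ∑ σ : ι → Bool, |signedSum 1 σ|
      = ∑ σ : ι → Bool, |∑ k, signedSum (c ∘ Equiv.addRight k) σ| := by
        rw [mul_sum]
        refine sum_congr rfl fun σ _ ↦ ?_
        rw [← hshift, abs_mul, abs_of_nonneg (sum_nonneg fun i _ ↦ hc i)]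
    _ ≤ ∑ σ : ι → Bool, ∑ k, |signedSum (c ∘ Equiv.addRight k) σ| :=
        sum_le_sum fun σ _ ↦ abs_sum_le_sum_abs _ _
    _ = ∑ k : ι, ∑ σ : ι → Bool, |signedSum c σ| := by
        rw [sum_comm]
        refine sum_congr rfl fun k _ ↦ ?_
        simp only [signedSum_comp_equiv]
        exact (Equiv.arrowCongr (Equiv.addRight k) (Equiv.refl Bool)).sum_comp
          (fun σ ↦ |signedSum c σ|)
    _ = Fintype.card ι * ∑ σ : ι → Bool, |signedSum c σ| := by
        rw [sum_const, card_univ, nsmul_eq_mul]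

lemma sum_fun_bool_apply_card {M : Type*} [AddCommMonoid M] (f : ℕ → M) :
    ∑ σ : ι → Bool, f #{i | σ i} =
      ∑ j ∈ range (Fintype.card ι + 1), (Fintype.card ι).choose j • f j := by
  let e : (ι → Bool) ≃ Finset ι :=
    { toFun σ := {i | σ i}
      invFun s i := decide (i ∈ s)
      left_inv σ := by ext; simp
      right_inv s := by ext; simp }
  calc ∑ σ : ι → Bool, f #{i | σ i} = ∑ s ∈ (univ : Finset ι).powerset, f #s := by
        rw [powerset_univ]; exact e.sum_comp (fun s ↦ f #s)
    _ = _ := by rw [sum_powerset_apply_card, card_univ]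

end SignedSum

lemma sum_range_abs_sub_of_unimodal (f : ℕ → ℝ) {k N : ℕ} (hkN : k ≤ N)
    (hmono : ∀ j < k, f j ≤ f (j + 1)) (hanti : ∀ j, k ≤ j → j < N → f (j + 1) ≤ f j) :
    ∑ j ∈ range N, |f (j + 1) - f j| = 2 * f k - f 0 - f N := by
  have hup : ∑ j ∈ range k, |f (j + 1) - f j| = f k - f 0 := by
    rw [← sum_range_sub]
    exact sum_congr rfl fun j hj ↦ abs_of_nonneg (sub_nonneg.2 (hmono j (mem_range.1 hj)))
  have hdown : ∑ j ∈ Ico k N, |f (j + 1) - f j| = f k - f N := by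
    rw [← neg_sub, ← sum_Ico_sub f hkN, ← sum_neg_distrib]
    refine sum_congr rfl fun j hj ↦ abs_of_nonpos (sub_nonpos.2 ?_)
    exact hanti j (mem_Ico.1 hj).1 (mem_Ico.1 hj).2
  rw [← sum_range_add_sum_Ico _ hkN, hup, hdown]
  ring

lemma add_one_mul_choose_sub_choose_succ (m j : ℕ) :
    ((m : ℝ) + 1) * (m.choose j - m.choose (j + 1)) =
      (2 * (j + 1) - (m + 1)) * (m + 1).choose (j + 1) := by
  have h₁ : ((m : ℝ) + 1) * m.choose j = (m + 1).choose (j + 1) * (j + 1) := by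
    exact_mod_cast Nat.add_one_mul_choose_eq m j
  have h₂ : ((m + 1).choose (j + 1) : ℝ) = m.choose j + m.choose (j + 1) := by
    exact_mod_cast Nat.choose_succ_succ m j
  linear_combination 2 * h₁ + ((m : ℝ) + 1) * h₂

/- De Moivre's mean absolute deviation of the binomial distribution: the terms telescope
against `G j = (m + 1) C(m, j)`, which rises up to `j = m / 2` and falls afterwards. -/
lemma sum_choose_mul_abs_two_mul_sub (m : ℕ) :
    ∑ j ∈ range (m + 2), ((m + 1).choose j : ℝ) * |2 * (j : ℝ) - (m + 1)| =
      2 * (m + 1) * m.choose (m / 2) := by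
  set G : ℕ → ℝ := fun j ↦ ((m : ℝ) + 1) * m.choose j with hG
  have hstep (j : ℕ) :
      G j - G (j + 1) = (2 * (j + 1) - (m + 1)) * (m + 1).choose (j + 1) := by
    rw [hG, ← mul_sub]
    exact add_one_mul_choose_sub_choose_succ m j
  have hterm (j : ℕ) :
      ((m + 1).choose (j + 1) : ℝ) * |2 * ((j + 1 : ℕ) : ℝ) - (m + 1)| = |G (j + 1) - G j| := by
    rw [abs_sub_comm (G (j + 1)), hstep, abs_mul, Nat.abs_cast, mul_comm]
    push_cast
    ring
  have hmono (j : ℕ) (hj : j < m / 2) : G j ≤ G (j + 1) := by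
    rw [← sub_nonpos, hstep]
    refine mul_nonpos_of_nonpos_of_nonneg (sub_nonpos.2 ?_) (Nat.cast_nonneg _)
    exact_mod_cast (by omega : 2 * (j + 1) ≤ m + 1)
  have hanti (j : ℕ) (hj : m / 2 ≤ j) (_ : j < m + 1) : G (j + 1) ≤ G j := by
    rw [← sub_nonneg, hstep]
    refine mul_nonneg (sub_nonneg.2 ?_) (Nat.cast_nonneg _)
    exact_mod_cast (by omega : m + 1 ≤ 2 * (j + 1))
  rw [sum_range_succ', sum_congr rfl fun j _ ↦ hterm j,
    sum_range_abs_sub_of_unimodal G (by omega) hmono hanti]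
  have hG0 : G 0 = m + 1 := by simp [hG]
  have hGtop : G (m + 1) = 0 := by simp [hG]
  have hfirst : ((m + 1).choose 0 : ℝ) * |2 * ((0 : ℕ) : ℝ) - (m + 1)| = m + 1 := by
    rw [Nat.choose_zero_right, Nat.cast_one, one_mul, Nat.cast_zero, mul_zero, zero_sub, abs_neg,
      abs_of_nonneg (by positivity)]
  rw [hG0, hGtop, hfirst]
  ring

lemma sixteen_pow_le_four_mul_centralBinom_sq {s : ℕ} (hs : 1 ≤ s) :
    16 ^ s ≤ 4 * s * s.centralBinom ^ 2 := by
  induction s, hs using Nat.le_induction with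
  | base => decide
  | succ s _ ih =>
    have hrec := Nat.succ_mul_centralBinom_succ s
    refine Nat.le_of_mul_le_mul_left ?_ (Nat.succ_pos s)
    calc (s + 1) * 16 ^ (s + 1) ≤ (s + 1) * 16 * (4 * s * s.centralBinom ^ 2) := by
          rw [pow_succ]; nlinarith
      _ ≤ 4 * (2 * (2 * s + 1) * s.centralBinom) ^ 2 := by nlinarith
      _ = (s + 1) * (4 * (s + 1) * (s + 1).centralBinom ^ 2) := by rw [← hrec]; ring

lemma four_pow_succ_le_eight_mul_choose_half_sq (m : ℕ) :
    4 ^ (m + 1) ≤ 8 * (m + 1) * m.choose (m / 2) ^ 2 := by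
  obtain ⟨s, rfl | rfl⟩ := Nat.even_or_odd' m
  · rw [show 2 * s / 2 = s by omega, ← Nat.centralBinom_eq_two_mul_choose]
    rcases Nat.eq_zero_or_pos s with rfl | hs
    · decide
    · have := sixteen_pow_le_four_mul_centralBinom_sq hs
      calc 4 ^ (2 * s + 1) = 4 * 16 ^ s := by rw [pow_succ, pow_mul]; ring
        _ ≤ 8 * (2 * s + 1) * s.centralBinom ^ 2 := by nlinarith
  · have hhalf : 2 * (2 * s + 1).choose s = (s + 1).centralBinom := by
      rw [Nat.centralBinom_eq_two_mul_choose, show 2 * (s + 1) = 2 * s + 1 + 1 by ring,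
        Nat.choose_succ_succ, Nat.choose_symm_half]
      ring
    rw [show (2 * s + 1) / 2 = s by omega]
    calc 4 ^ (2 * s + 1 + 1) = 16 ^ (s + 1) := by
          rw [show 2 * s + 1 + 1 = 2 * (s + 1) by ring, pow_mul]; norm_num
      _ ≤ 4 * (s + 1) * (2 * (2 * s + 1).choose s) ^ 2 := by
          rw [hhalf]; exact sixteen_pow_le_four_mul_centralBinom_sq (Nat.succ_pos s)
      _ = 8 * (2 * s + 1 + 1) * (2 * s + 1).choose s ^ 2 := by ring

lemma sqrt_half_card_mul_two_pow_le_sum_abs_signedSum_one {ι : Type*} [Fintype ι]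
    [DecidableEq ι] :
    √(Fintype.card ι / 2) * 2 ^ Fintype.card ι ≤ ∑ σ : ι → Bool, |signedSum 1 σ| := by
  have hcount : ∑ σ : ι → Bool, |signedSum 1 σ| =
      ∑ j ∈ range (Fintype.card ι + 1), ((Fintype.card ι).choose j : ℝ) *
        |2 * (j : ℝ) - Fintype.card ι| := by
    simp only [signedSum_one, sum_fun_bool_apply_card (fun j ↦ |2 * (j : ℝ) - Fintype.card ι|),
      nsmul_eq_mul]
  rcases Nat.eq_zero_or_eq_succ_pred (Fintype.card ι) with hn | hn
  · simpa [hn] using sum_nonneg fun σ _ ↦ abs_nonneg (signedSum 1 σ)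
  rw [hcount, hn, Nat.succ_eq_add_one, Nat.cast_add_one, sum_choose_mul_abs_two_mul_sub]
  set m := (Fintype.card ι).pred
  have hbound : (4 : ℝ) ^ (m + 1) ≤ 8 * (m + 1) * m.choose (m / 2) ^ 2 := by
    exact_mod_cast four_pow_succ_le_eight_mul_choose_half_sq m
  have hsq : ((2 : ℝ) ^ (m + 1)) ^ 2 = 4 ^ (m + 1) := by
    rw [← pow_mul, mul_comm, pow_mul]; norm_num
  calc √((m + 1) / 2) * 2 ^ (m + 1) = √((m + 1) / 2 * (2 ^ (m + 1)) ^ 2) := by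
        rw [Real.sqrt_mul' _ (by positivity), Real.sqrt_sq (by positivity)]
    _ ≤ √((2 * (m + 1) * m.choose (m / 2)) ^ 2) := by
        gcongr
        rw [hsq]
        nlinarith
    _ = 2 * (m + 1) * m.choose (m / 2) := Real.sqrt_sq (by positivity)

theorem expected_abs_sum_lower (n : ℕ) (hn : 1 ≤ n) (a : Fin n → ℝ) :
    (∑ i, |a i|) / Real.sqrt (8 * n) ≤
      (∑ σ : Fin n → Bool, |∑ i, if σ i then a i else 0|) / 2 ^ n := by
  have : NeZero n := ⟨by omega⟩
  set A := ∑ i, |a i|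
  set E := ∑ σ : Fin n → Bool, |∑ i, if σ i then a i else 0|
  set s := √((n : ℝ) / 2)
  have hdev : s * 2 ^ n ≤ ∑ σ : Fin n → Bool, |signedSum 1 σ| := by
    simpa only [Fintype.card_fin] using
      sqrt_half_card_mul_two_pow_le_sum_abs_signedSum_one (ι := Fin n)
  have havg := sum_mul_sum_abs_signedSum_one_le (fun i ↦ |a i|) fun i ↦ abs_nonneg (a i)
  rw [sum_abs_signedSum_abs, Fintype.card_fin] at havg
  have hs2 : s ^ 2 = n / 2 := Real.sq_sqrt (by positivity)
  have key : A * s * 2 ^ n ≤ 4 * s ^ 2 * E := by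
    calc A * s * 2 ^ n ≤ A * ∑ σ : Fin n → Bool, |signedSum 1 σ| := by
          rw [mul_assoc]; exact mul_le_mul_of_nonneg_left hdev (by positivity)
      _ ≤ n * (2 * E) :=
          havg.trans (mul_le_mul_of_nonneg_left (sum_abs_signedSum_le_two_mul a) (by positivity))
      _ = 4 * s ^ 2 * E := by rw [hs2]; ring
  have hsqrt : √(8 * n : ℝ) = 4 * s := by
    rw [show (8 : ℝ) * n = 4 ^ 2 * (n / 2) by ring, Real.sqrt_mul' _ (by positivity),
      Real.sqrt_sq (by norm_num)]
  have hs : 0 < s := by positivity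
  rw [hsqrt, div_le_div_iff₀ (by positivity) (by positivity)]
  nlinarith
end

section
/- Let W be a finite set, let i ≥ 1 be an integer, and let χ be a real-valued function on the i-element subsets of W. Let D̄ > 0 be a real number such that for every (i−1)-element subset B ⊆ W, the number of vertices t ∈ W∖B with χ(B ∪ {t}) ≠ 0 is at most 2D̄. Let (S, T) be a random partition of W in which each vertex is independently assigned to S or to T with probability 1/2 each. Then E[ Σ_{B ⊆ S, |B| = i−1} | Σ_{t ∈ T} χ(B ∪ {t}) | ] ≥ i · 2^{−i−3} · ( Σ_{L ⊆ W, |L| = i} |χ(L)| ) / √D̄. -/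
open Finset
open scoped Classical

lemma Zsq_sum {α : Type*} [DecidableEq α] (f : α → ℝ) (U : Finset α) :
    ∑ T ∈ U.powerset, ((∑ t ∈ T, f t) - (∑ t ∈ U, f t) / 2) ^ 2
      = 2 ^ U.card * (∑ t ∈ U, f t ^ 2) / 4 := by
  induction U using Finset.induction_on with
  | empty => simp
  | @insert a U ha ih =>

    rw [Finset.sum_powerset_insert ha, Finset.sum_insert ha, Finset.sum_insert ha,
      Finset.card_insert_of_notMem ha]
    have h1 : ∀ T ∈ U.powerset, ((∑ t ∈ insert a T, f t) - (f a + ∑ t ∈ U, f t) / 2) ^ 2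
        = ((∑ t ∈ T, f t) - (∑ t ∈ U, f t) / 2 + f a / 2) ^ 2 := by
      intro T hT
      rw [Finset.sum_insert (fun h => ha (Finset.mem_powerset.mp hT h))]
      ring
    rw [Finset.sum_congr rfl h1]
    have h2 : ∀ T ∈ U.powerset, ((∑ t ∈ T, f t) - (f a + ∑ t ∈ U, f t) / 2) ^ 2
        = ((∑ t ∈ T, f t) - (∑ t ∈ U, f t) / 2 - f a / 2) ^ 2 := by
      intro T hT; ring
    rw [Finset.sum_congr rfl h2]
    have h3 : ∀ T ∈ U.powerset,
        ((∑ t ∈ T, f t) - (∑ t ∈ U, f t) / 2 - f a / 2) ^ 2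
          + ((∑ t ∈ T, f t) - (∑ t ∈ U, f t) / 2 + f a / 2) ^ 2
        = 2 * ((∑ t ∈ T, f t) - (∑ t ∈ U, f t) / 2) ^ 2 + f a ^ 2 / 2 := by
      intro T hT; ring
    rw [← Finset.sum_add_distrib, Finset.sum_congr rfl h3, Finset.sum_add_distrib,
      ← Finset.mul_sum, ih, Finset.sum_const, Finset.card_powerset]
    push_cast
    ring

lemma Zfour_sum {α : Type*} [DecidableEq α] (f : α → ℝ) (U : Finset α) :
    ∑ T ∈ U.powerset, ((∑ t ∈ T, f t) - (∑ t ∈ U, f t) / 2) ^ 4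
      ≤ 2 ^ U.card * 3 * (∑ t ∈ U, f t ^ 2) ^ 2 / 16 := by
  induction U using Finset.induction_on with
  | empty => simp
  | @insert a U ha ih =>
    rw [Finset.sum_powerset_insert ha, Finset.sum_insert ha, Finset.sum_insert ha,
      Finset.card_insert_of_notMem ha]
    have h1 : ∀ T ∈ U.powerset, ((∑ t ∈ insert a T, f t) - (f a + ∑ t ∈ U, f t) / 2) ^ 4
        = ((∑ t ∈ T, f t) - (∑ t ∈ U, f t) / 2 + f a / 2) ^ 4 := by
      intro T hT
      rw [Finset.sum_insert (fun h => ha (Finset.mem_powerset.mp hT h))]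
      ring
    rw [Finset.sum_congr rfl h1]
    have h2 : ∀ T ∈ U.powerset, ((∑ t ∈ T, f t) - (f a + ∑ t ∈ U, f t) / 2) ^ 4
        = ((∑ t ∈ T, f t) - (∑ t ∈ U, f t) / 2 - f a / 2) ^ 4 := by
      intro T hT; ring
    rw [Finset.sum_congr rfl h2]
    have h3 : ∀ T ∈ U.powerset,
        ((∑ t ∈ T, f t) - (∑ t ∈ U, f t) / 2 - f a / 2) ^ 4
          + ((∑ t ∈ T, f t) - (∑ t ∈ U, f t) / 2 + f a / 2) ^ 4
        = 2 * ((∑ t ∈ T, f t) - (∑ t ∈ U, f t) / 2) ^ 4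
          + 3 * f a ^ 2 * ((∑ t ∈ T, f t) - (∑ t ∈ U, f t) / 2) ^ 2 + f a ^ 4 / 8 := by
      intro T hT; ring
    rw [← Finset.sum_add_distrib, Finset.sum_congr rfl h3, Finset.sum_add_distrib,
      Finset.sum_add_distrib, ← Finset.mul_sum, ← Finset.mul_sum, Zsq_sum,
      Finset.sum_const, Finset.card_powerset]
    have hQ : (0:ℝ) ≤ ∑ t ∈ U, f t ^ 2 := Finset.sum_nonneg fun t _ => sq_nonneg _
    have hN : (0:ℝ) < 2 ^ U.card := by positivity
    rw [nsmul_eq_mul]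
    push_cast
    nlinarith [pow_succ (2:ℝ) U.card, mul_nonneg hN.le (sq_nonneg (f a ^ 2)),
      mul_nonneg hN.le (mul_nonneg (sq_nonneg (f a)) hQ)]

lemma symm_ge {α : Type*} [DecidableEq α] (f : α → ℝ) (U : Finset α) :
    ∑ T ∈ U.powerset, |(∑ t ∈ T, f t) - (∑ t ∈ U, f t) / 2|
      ≤ ∑ T ∈ U.powerset, |∑ t ∈ T, f t| := by
  have hflip : ∑ T ∈ U.powerset, |∑ t ∈ U \ T, f t| = ∑ T ∈ U.powerset, |∑ t ∈ T, f t| := by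
    refine Finset.sum_nbij' (fun T => U \ T) (fun T => U \ T) ?_ ?_ ?_ ?_ ?_
    · intro T hT; exact Finset.mem_powerset.mpr (Finset.sdiff_subset)
    · intro T hT; exact Finset.mem_powerset.mpr (Finset.sdiff_subset)
    · intro T hT
      exact Finset.sdiff_sdiff_eq_self (Finset.mem_powerset.mp hT)
    · intro T hT
      exact Finset.sdiff_sdiff_eq_self (Finset.mem_powerset.mp hT)
    · intro T hT; rfl
  have key : ∀ T ∈ U.powerset,
      2 * |(∑ t ∈ T, f t) - (∑ t ∈ U, f t) / 2| ≤ |∑ t ∈ T, f t| + |∑ t ∈ U \ T, f t| := by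
    intro T hT
    have hs : ∑ t ∈ U \ T, f t = (∑ t ∈ U, f t) - ∑ t ∈ T, f t :=
      Finset.sum_sdiff_eq_sub (Finset.mem_powerset.mp hT)
    rw [hs]
    have habs := abs_mul (2:ℝ) ((∑ t ∈ T, f t) - (∑ t ∈ U, f t) / 2)
    rw [abs_two] at habs
    have hrw : |(∑ t ∈ T, f t) - ((∑ t ∈ U, f t) - ∑ t ∈ T, f t)|
        = |2 * ((∑ t ∈ T, f t) - (∑ t ∈ U, f t) / 2)| := by
      congr 1; ring
    have := abs_sub (∑ t ∈ T, f t) ((∑ t ∈ U, f t) - ∑ t ∈ T, f t)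
    rw [hrw, habs] at this
    linarith
  have h2 : 2 * ∑ T ∈ U.powerset, |(∑ t ∈ T, f t) - (∑ t ∈ U, f t) / 2|
      ≤ ∑ T ∈ U.powerset, (|∑ t ∈ T, f t| + |∑ t ∈ U \ T, f t|) := by
    rw [Finset.mul_sum]
    exact Finset.sum_le_sum key
  rw [Finset.sum_add_distrib, hflip] at h2
  linarith

lemma holder_cube (N Q A C P4 : ℝ) (hN0 : 0 < N) (hQ0 : 0 ≤ Q) (hA0 : 0 ≤ A)
    (hC0 : 0 ≤ C) (hCS1 : (N * Q / 4) ^ 2 ≤ A * C) (hCS2 : C ^ 2 ≤ (N * Q / 4) * P4)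
    (hP4 : P4 ≤ N * 3 * Q ^ 2 / 16) : N ^ 2 * Q ≤ 12 * A ^ 2 := by
  rcases eq_or_lt_of_le hQ0 with hQz | hQpos
  · nlinarith [sq_nonneg A]
  · have hP2pos : (0:ℝ) < N * Q / 4 := by positivity
    have hmain : (N * Q / 4) ^ 4 ≤ A ^ 2 * ((N * Q / 4) * (N * 3 * Q ^ 2 / 16)) := by
      have m1 : (N * Q / 4) ^ 2 * ((N * Q / 4) ^ 2) ≤ (A * C) * (A * C) :=
        mul_le_mul hCS1 hCS1 (sq_nonneg _) (mul_nonneg hA0 hC0)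
      have m2 : A ^ 2 * (C ^ 2) ≤ A ^ 2 * ((N * Q / 4) * P4) :=
        mul_le_mul_of_nonneg_left hCS2 (sq_nonneg A)
      have m3 : A ^ 2 * ((N * Q / 4) * P4) ≤ A ^ 2 * ((N * Q / 4) * (N * 3 * Q ^ 2 / 16)) :=
        mul_le_mul_of_nonneg_left (mul_le_mul_of_nonneg_left hP4 hP2pos.le) (sq_nonneg A)
      nlinarith [m1, m2, m3]
    nlinarith [hmain, mul_pos (mul_pos hN0 hN0) (mul_pos hQpos (mul_pos hQpos hQpos)),
      sq_nonneg A, mul_pos hN0 hQpos]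

lemma conclude_real (N S Q A Bb Dbar : ℝ) (hD : 0 < Dbar) (hN0 : 0 < N) (hS0 : 0 ≤ S)
    (hA0 : 0 ≤ A) (hAB : A ≤ Bb) (h1 : N ^ 2 * Q ≤ 12 * A ^ 2) (h2 : S ^ 2 ≤ 2 * Dbar * Q) :
    N * S ≤ 8 * Real.sqrt Dbar * Bb := by
  have hB0 : 0 ≤ Bb := le_trans hA0 hAB
  have hDs : Real.sqrt Dbar ^ 2 = Dbar := Real.sq_sqrt hD.le
  have hA2B2 : A ^ 2 ≤ Bb ^ 2 := pow_le_pow_left₀ hA0 hAB 2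
  have hsq : (N * S) ^ 2 ≤ (8 * Real.sqrt Dbar * Bb) ^ 2 := by
    have c1 : N ^ 2 * S ^ 2 ≤ N ^ 2 * (2 * Dbar * Q) :=
      mul_le_mul_of_nonneg_left h2 (sq_nonneg N)
    have c2 : 2 * Dbar * (N ^ 2 * Q) ≤ 2 * Dbar * (12 * A ^ 2) :=
      mul_le_mul_of_nonneg_left h1 (mul_nonneg (by norm_num) hD.le)
    have c3 : 24 * Dbar * A ^ 2 ≤ 24 * Dbar * Bb ^ 2 :=
      mul_le_mul_of_nonneg_left hA2B2 (mul_nonneg (by norm_num) hD.le)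
    have c4 : 24 * Dbar * Bb ^ 2 ≤ 64 * Dbar * Bb ^ 2 := by
      nlinarith [mul_nonneg hD.le (sq_nonneg Bb)]
    calc (N * S) ^ 2 = N ^ 2 * S ^ 2 := by ring
      _ ≤ N ^ 2 * (2 * Dbar * Q) := c1
      _ = 2 * Dbar * (N ^ 2 * Q) := by ring
      _ ≤ 2 * Dbar * (12 * A ^ 2) := c2
      _ = 24 * Dbar * A ^ 2 := by ring
      _ ≤ 24 * Dbar * Bb ^ 2 := c3
      _ ≤ 64 * Dbar * Bb ^ 2 := c4
      _ = 64 * Real.sqrt Dbar ^ 2 * Bb ^ 2 := by rw [hDs]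
      _ = (8 * Real.sqrt Dbar * Bb) ^ 2 := by ring
  have hLnn : 0 ≤ N * S := mul_nonneg hN0.le hS0
  have hRnn : 0 ≤ 8 * Real.sqrt Dbar * Bb :=
    mul_nonneg (mul_nonneg (by norm_num) (Real.sqrt_nonneg _)) hB0
  calc N * S = Real.sqrt ((N * S) ^ 2) := (Real.sqrt_sq hLnn).symm
    _ ≤ Real.sqrt ((8 * Real.sqrt Dbar * Bb) ^ 2) := Real.sqrt_le_sqrt hsq
    _ = 8 * Real.sqrt Dbar * Bb := Real.sqrt_sq hRnn

lemma key_lemma {α : Type*} [DecidableEq α] (f : α → ℝ) (U : Finset α)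
    (Dbar : ℝ) (hD : 0 < Dbar)
    (hm : ((U.filter fun t => f t ≠ 0).card : ℝ) ≤ 2 * Dbar) :
    2 ^ U.card * (∑ t ∈ U, |f t|) ≤ 8 * Real.sqrt Dbar * ∑ T ∈ U.powerset, |∑ t ∈ T, f t| := by
  set Q : ℝ := ∑ t ∈ U, f t ^ 2 with hQdef
  set Z : Finset α → ℝ := fun T => (∑ t ∈ T, f t) - (∑ t ∈ U, f t) / 2 with hZdef
  set A : ℝ := ∑ T ∈ U.powerset, |Z T| with hAdef
  set Bb : ℝ := ∑ T ∈ U.powerset, |∑ t ∈ T, f t| with hBdef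
  set N : ℝ := 2 ^ U.card with hNdef
  set S : ℝ := ∑ t ∈ U, |f t| with hSdef
  have hQ0 : 0 ≤ Q := Finset.sum_nonneg fun t _ => sq_nonneg _
  have hN0 : 0 < N := by positivity
  have hA0 : 0 ≤ A := Finset.sum_nonneg fun T _ => abs_nonneg _
  have hS0 : 0 ≤ S := Finset.sum_nonneg fun t _ => abs_nonneg _
  have hAB : A ≤ Bb := symm_ge f U
  -- Step 1 : N^2 * Q ≤ 12 * A^2
  have hP2 : ∑ T ∈ U.powerset, Z T ^ 2 = N * Q / 4 := Zsq_sum f U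
  have hP4 : ∑ T ∈ U.powerset, Z T ^ 4 ≤ N * 3 * Q ^ 2 / 16 := Zfour_sum f U
  have hP40 : 0 ≤ ∑ T ∈ U.powerset, Z T ^ 4 :=
    Finset.sum_nonneg fun T _ => by positivity
  -- Cauchy-Schwarz 1 : (∑ Z^2)^2 ≤ A * (∑ |Z| * Z^2)
  have hCS1 : (∑ T ∈ U.powerset, Z T ^ 2) ^ 2
      ≤ A * ∑ T ∈ U.powerset, |Z T| * Z T ^ 2 := by
    have h := Finset.sum_mul_sq_le_sq_mul_sq U.powerset
      (fun T => Real.sqrt |Z T|) (fun T => Real.sqrt |Z T| * |Z T|)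
    have e1 : ∀ T ∈ U.powerset,
        Real.sqrt |Z T| * (Real.sqrt |Z T| * |Z T|) = Z T ^ 2 := by
      intro T _
      rw [← mul_assoc, Real.mul_self_sqrt (abs_nonneg _), abs_mul_abs_self, sq]
    have e2 : ∀ T ∈ U.powerset, Real.sqrt |Z T| ^ 2 = |Z T| := by
      intro T _; exact Real.sq_sqrt (abs_nonneg _)
    have e3 : ∀ T ∈ U.powerset, (Real.sqrt |Z T| * |Z T|) ^ 2 = |Z T| * Z T ^ 2 := by
      intro T _
      rw [mul_pow, Real.sq_sqrt (abs_nonneg _), sq_abs]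
    rw [Finset.sum_congr rfl e1, Finset.sum_congr rfl e2, Finset.sum_congr rfl e3] at h
    exact h
  -- Cauchy-Schwarz 2 : (∑ |Z| * Z^2)^2 ≤ (∑ Z^2) * (∑ Z^4)
  have hCS2 : (∑ T ∈ U.powerset, |Z T| * Z T ^ 2) ^ 2
      ≤ (∑ T ∈ U.powerset, Z T ^ 2) * ∑ T ∈ U.powerset, Z T ^ 4 := by
    have h := Finset.sum_mul_sq_le_sq_mul_sq U.powerset (fun T => |Z T|) (fun T => Z T ^ 2)
    have e2 : ∀ T ∈ U.powerset, |Z T| ^ 2 = Z T ^ 2 := fun T _ => sq_abs _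
    have e3 : ∀ T ∈ U.powerset, (Z T ^ 2) ^ 2 = Z T ^ 4 := fun T _ => by ring
    rw [Finset.sum_congr rfl e2, Finset.sum_congr rfl e3] at h
    exact h
  have hC0 : 0 ≤ ∑ T ∈ U.powerset, |Z T| * Z T ^ 2 :=
    Finset.sum_nonneg fun T _ => mul_nonneg (abs_nonneg _) (sq_nonneg _)
  have hstep1 : N ^ 2 * Q ≤ 12 * A ^ 2 := by
    rw [hP2] at hCS1 hCS2
    exact holder_cube N Q A (∑ T ∈ U.powerset, |Z T| * Z T ^ 2)
      (∑ T ∈ U.powerset, Z T ^ 4) hN0 hQ0 hA0 hC0 hCS1 hCS2 hP4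
  have hstep2 : S ^ 2 ≤ 2 * Dbar * Q := by
    have hsub : (U.filter fun t => f t ≠ 0) ⊆ U := Finset.filter_subset _ _
    have hSsupp : S = ∑ t ∈ U.filter fun t => f t ≠ 0, |f t| := by
      rw [hSdef]
      refine (Finset.sum_subset hsub ?_).symm
      intro t htU ht
      simp only [Finset.mem_filter, not_and, not_not] at ht
      rw [ht htU, abs_zero]
    have hCS := Finset.sum_mul_sq_le_sq_mul_sq (U.filter fun t => f t ≠ 0)
      (fun t => |f t|) (fun _ => (1:ℝ))
    simp only [mul_one, one_pow, Finset.sum_const, nsmul_eq_mul, mul_one, sq_abs] at hCS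
    have hQle : ∑ t ∈ U.filter fun t => f t ≠ 0, f t ^ 2 ≤ Q :=
      Finset.sum_le_sum_of_subset_of_nonneg hsub fun t _ _ => sq_nonneg _
    calc S ^ 2 = (∑ t ∈ U.filter fun t => f t ≠ 0, |f t|) ^ 2 := by rw [hSsupp]
      _ ≤ (∑ t ∈ U.filter fun t => f t ≠ 0, f t ^ 2)
            * ((U.filter fun t => f t ≠ 0).card : ℝ) := hCS
      _ ≤ Q * (2 * Dbar) := by
          apply mul_le_mul hQle hm (Nat.cast_nonneg _) hQ0
      _ = 2 * Dbar * Q := by ring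
  exact conclude_real N S Q A Bb Dbar hD hN0 hS0 hA0 hAB hstep1 hstep2

theorem random_partition_lower_bound {α : Type*} [DecidableEq α]
    (W : Finset α) (i : ℕ) (hi : 1 ≤ i) (χ : Finset α → ℝ)
    (Dbar : ℝ) (hD : 0 < Dbar)
    (hsupp : ∀ B ⊆ W, B.card = i - 1 →
      (((W \ B).filter fun t => χ (insert t B) ≠ 0).card : ℝ) ≤ 2 * Dbar) :
    (i : ℝ) * ((2 : ℝ) ^ (i + 3))⁻¹ *
        (∑ L ∈ W.powerset.filter fun L => L.card = i, |χ L|) / Real.sqrt Dbar ≤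
      (∑ S ∈ W.powerset,
          ∑ B ∈ S.powerset.filter fun B => B.card = i - 1,
            |∑ t ∈ W \ S, χ (insert t B)|) / 2 ^ W.card := by
  have hsqrtpos : 0 < Real.sqrt Dbar := Real.sqrt_pos.mpr hD
  have hRHSnn : (0:ℝ) ≤ ∑ S ∈ W.powerset,
      ∑ B ∈ S.powerset.filter fun B => B.card = i - 1, |∑ t ∈ W \ S, χ (insert t B)| :=
    Finset.sum_nonneg fun S _ => Finset.sum_nonneg fun B _ => abs_nonneg _
  by_cases hiW : i ≤ W.card
  swap
  · -- degenerate case : no i-subsets of W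
    have hempty : (W.powerset.filter fun L => L.card = i) = ∅ := by
      apply Finset.filter_false_of_mem
      intro L hL hcard
      exact hiW (hcard ▸ Finset.card_le_card (Finset.mem_powerset.mp hL))
    rw [hempty]
    simp only [Finset.sum_empty, mul_zero, zero_div]
    positivity
  -- step 1 : swap the sums and reindex S ↦ W \ S
  have hswap : (∑ S ∈ W.powerset,
        ∑ B ∈ S.powerset.filter fun B => B.card = i - 1, |∑ t ∈ W \ S, χ (insert t B)|)
      = ∑ B ∈ W.powerset.filter fun B => B.card = i - 1,
          ∑ T ∈ (W \ B).powerset, |∑ t ∈ T, χ (insert t B)| := by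
    rw [Finset.sum_comm' (t' := W.powerset.filter fun B => B.card = i - 1)
      (s' := fun B => W.powerset.filter fun S => B ⊆ S) ?_]
    · refine Finset.sum_congr rfl fun B hB => ?_
      refine Finset.sum_nbij' (fun S => W \ S) (fun T => W \ T) ?_ ?_ ?_ ?_ ?_
      · intro S hS
        simp only [Finset.mem_filter, Finset.mem_powerset] at hS ⊢
        exact Finset.sdiff_subset_sdiff le_rfl hS.2
      · intro T hT
        simp only [Finset.mem_filter, Finset.mem_powerset] at hB hT ⊢
        constructor
        · exact Finset.sdiff_subset
        · intro x hx
          simp only [Finset.mem_sdiff]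
          exact ⟨hB.1 hx, fun hxT => (Finset.mem_sdiff.mp (hT hxT)).2 hx⟩
      · intro S hS
        simp only [Finset.mem_filter, Finset.mem_powerset] at hS
        exact Finset.sdiff_sdiff_eq_self hS.1
      · intro T hT
        simp only [Finset.mem_powerset] at hT
        exact Finset.sdiff_sdiff_eq_self (hT.trans Finset.sdiff_subset)
      · intro S hS; rfl
    · intro S B
      simp only [Finset.mem_filter, Finset.mem_powerset]
      constructor
      · rintro ⟨hSW, hBS, hcard⟩
        exact ⟨⟨hSW, hBS⟩, ⟨hBS.trans hSW, hcard⟩⟩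
      · rintro ⟨⟨hSW, hBS⟩, ⟨hBW, hcard⟩⟩
        exact ⟨hSW, hBS, hcard⟩
  rw [hswap]
  set P := W.powerset.filter fun B => B.card = i - 1 with hPdef
  set Pi := W.powerset.filter fun L => L.card = i with hPidef
  -- double counting
  have hcount : ∑ B ∈ P, ∑ t ∈ W \ B, |χ (insert t B)|
      = (i : ℝ) * ∑ L ∈ Pi, |χ L| := by
    rw [Finset.sum_sigma' P (fun B => W \ B) (fun B t => |χ (insert t B)|)]
    have : ∑ x ∈ P.sigma fun B => W \ B, |χ (insert x.2 x.1)|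
        = ∑ x ∈ Pi.sigma fun L => L, |χ x.1| := by
      refine Finset.sum_nbij' (fun x => ⟨insert x.2 x.1, x.2⟩)
        (fun x => ⟨x.1.erase x.2, x.2⟩) ?_ ?_ ?_ ?_ ?_
      · rintro ⟨B, t⟩ hx
        simp only [hPdef, hPidef, Finset.mem_sigma, Finset.mem_filter, Finset.mem_powerset,
          Finset.mem_sdiff] at hx ⊢
        obtain ⟨⟨hBW, hBc⟩, htW, htB⟩ := hx
        refine ⟨⟨?_, ?_⟩, Finset.mem_insert_self _ _⟩
        · exact Finset.insert_subset htW hBW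
        · rw [Finset.card_insert_of_notMem htB, hBc]; omega
      · rintro ⟨L, t⟩ hx
        simp only [hPdef, hPidef, Finset.mem_sigma, Finset.mem_filter, Finset.mem_powerset,
          Finset.mem_sdiff] at hx ⊢
        obtain ⟨⟨hLW, hLc⟩, htL⟩ := hx
        refine ⟨⟨(Finset.erase_subset _ _).trans hLW, ?_⟩, hLW htL, Finset.notMem_erase _ _⟩
        rw [Finset.card_erase_of_mem htL, hLc]
      · rintro ⟨B, t⟩ hx
        simp only [hPdef, hPidef, Finset.mem_sigma, Finset.mem_filter, Finset.mem_powerset,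
          Finset.mem_sdiff] at hx
        obtain ⟨⟨hBW, hBc⟩, htW, htB⟩ := hx
        simp only [Sigma.mk.inj_iff, heq_eq_eq, and_true]
        exact Finset.erase_insert htB
      · rintro ⟨L, t⟩ hx
        simp only [hPdef, hPidef, Finset.mem_sigma, Finset.mem_filter, Finset.mem_powerset] at hx
        obtain ⟨⟨hLW, hLc⟩, htL⟩ := hx
        simp only [Sigma.mk.inj_iff, heq_eq_eq, and_true]
        exact Finset.insert_erase htL
      · rintro ⟨B, t⟩ hx; rfl
    rw [this, Finset.sum_sigma Pi (fun L => L) (fun x => |χ x.1|)]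
    rw [Finset.mul_sum]
    refine Finset.sum_congr rfl fun L hL => ?_
    simp only [hPidef, Finset.mem_filter, Finset.mem_powerset] at hL
    simp [hL.2, mul_comm]
  -- apply the key lemma to each B
  have hkey : 2 ^ (W.card - (i - 1)) * ∑ B ∈ P, ∑ t ∈ W \ B, |χ (insert t B)|
      ≤ 8 * Real.sqrt Dbar * ∑ B ∈ P, ∑ T ∈ (W \ B).powerset, |∑ t ∈ T, χ (insert t B)| := by
    rw [Finset.mul_sum, Finset.mul_sum]
    refine Finset.sum_le_sum fun B hB => ?_
    simp only [hPdef, Finset.mem_filter, Finset.mem_powerset] at hB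
    have hcard : (W \ B).card = W.card - (i - 1) := by
      rw [Finset.card_sdiff_of_subset hB.1, hB.2]
    have h := key_lemma (fun t => χ (insert t B)) (W \ B) Dbar hD (hsupp B hB.1 hB.2)
    rw [hcard] at h
    exact h
  rw [hcount] at hkey
  -- final arithmetic
  rw [div_le_div_iff₀ hsqrtpos (by positivity : (0:ℝ) < 2 ^ W.card)]
  have hRnn : (0:ℝ) ≤ ∑ B ∈ P, ∑ T ∈ (W \ B).powerset, |∑ t ∈ T, χ (insert t B)| :=
    Finset.sum_nonneg fun B _ => Finset.sum_nonneg fun T _ => abs_nonneg _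
  have hStotnn : (0:ℝ) ≤ ∑ L ∈ Pi, |χ L| := Finset.sum_nonneg fun L _ => abs_nonneg _
  have hpow1 : (2:ℝ) ^ W.card = 2 ^ (W.card - (i-1)) * 2 ^ (i-1) := by
    rw [← pow_add]
    congr 1
    omega
  have hpow2 : (2:ℝ) ^ (i + 3) = 2 ^ (i-1) * 16 := by
    rw [show i + 3 = (i-1) + 4 by omega, pow_add]
    norm_num
  rw [hpow1, hpow2]
  have hx : (0:ℝ) < 2 ^ (i-1) := by positivity
  have hy : (0:ℝ) < 2 ^ (W.card - (i-1)) := by positivity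
  have hLHS : (i:ℝ) * ((2:ℝ) ^ (i-1) * 16)⁻¹ * (∑ L ∈ Pi, |χ L|)
        * ((2:ℝ) ^ (W.card - (i-1)) * 2 ^ (i-1))
      = 2 ^ (W.card - (i-1)) * ((i:ℝ) * ∑ L ∈ Pi, |χ L|) / 16 := by
    field_simp
  rw [hLHS]
  have hfin : 0 ≤ Real.sqrt Dbar * ∑ B ∈ P, ∑ T ∈ (W \ B).powerset, |∑ t ∈ T, χ (insert t B)| :=
    mul_nonneg hsqrtpos.le hRnn
  rw [div_le_iff₀ (by norm_num : (0:ℝ) < 16)]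
  nlinarith [hkey, hfin]
end
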